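/- Lemma F.2 (analytic radial kernels admit a rotationally invariant expansion). Let d ≥ 2 and let h : ℝ → ℝ be real-analytic in a neighborhood of 2, with Taylor coefficients h_i at the point 2. Then the radial kernel k(x,x') = h(‖x−x'‖₂²) on ℝ^d satisfies Assumption (C.1); concretely, there exist δ, δ' > 0 and functions g_j : ℝ² → ℝ, each smooth in a neighborhood of (1,1) and given by g_j(u,v) = Σ_{i=j}^∞ Σ_{l=0}^{i−j} h_i·(−2)^j·binom(i,j)·binom(i−j,l)·(u−1)^l·(v−1)^{i−l−j}, such that for all x, x' ∈ ℝ^d with ‖x‖₂², ‖x'‖₂² ∈ [1−δ, 1+δ] and |xᵀx'| ≤ δ', the series Σ_{j=0}^∞ g_j(‖x‖₂², ‖x'‖₂²)·(xᵀx')^j converges absolutely and equals h(‖x−x'‖₂²). -/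

import Mathlib

open MeasureTheory ProbabilityTheory Filter Matrix
open scoped Topology NNReal ENNReal

noncomputable section
def dotp {d : ℕ} (x y : Fin d → ℝ) : ℝ := ∑ i, x i * y i
def sqnorm {d : ℕ} (x : Fin d → ℝ) : ℝ := dotp x x
def IsCoordDist (ν : Measure ℝ) : Prop :=
  ν = gaussianReal 0 1 ∨
    (IsProbabilityMeasure ν ∧ (∃ C : ℝ, ∀ᵐ x ∂ν, |x| ≤ C) ∧
      (∫ x, x ∂ν) = 0 ∧ (∫ x, x ^ 2 ∂ν) = 1)
/-- The positive semidefinite square root of a positive semidefinite matrix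
(the definition removed from Mathlib, restated with its old meaning). -/
def Matrix.PosSemidef.sqrt {n : Type*} [Fintype n] [DecidableEq n]
    {A : Matrix n n ℝ} (hA : A.PosSemidef) : Matrix n n ℝ :=
  hA.1.eigenvectorUnitary.1 * diagonal ((↑) ∘ (Real.sqrt ·) ∘ hA.1.eigenvalues) *
    (star hA.1.eigenvectorUnitary : Matrix n n ℝ)
def IsCovarianceModel {d : ℕ} (S : Matrix (Fin d) (Fin d) ℝ) (hS : S.PosSemidef)
    (μ : Measure (Fin d → ℝ)) : Prop :=
  ∃ ν : Measure ℝ, IsCoordDist ν ∧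
    μ = (Measure.pi fun _ : Fin d => ν).map (fun w => hS.sqrt.mulVec w)
def IsSphereModel {d : ℕ} (S : Matrix (Fin d) (Fin d) ℝ) (hS : S.PosSemidef)
    (μ : Measure (Fin d → ℝ)) : Prop :=
  ∃ μZ : Measure (Fin d → ℝ), IsCovarianceModel S hS μZ ∧
    μ = μZ.map (fun z => (Real.sqrt S.trace / Real.sqrt (sqnorm z)) • z)
def OpNormOne {d : ℕ} (S : Matrix (Fin d) (Fin d) ℝ) : Prop :=
  IsGreatest {r : ℝ | ∃ x : Fin d → ℝ, sqnorm x = 1 ∧ dotp x (S.mulVec x) = r} 1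
def IsPSDKernel1 (q : ℝ → ℝ → ℝ) : Prop :=
  ∀ (N : ℕ) (u : Fin N → ℝ), (Matrix.of fun a b => q (u a) (u b)).PosSemidef
def AssumptionA1 (g : ℝ → ℝ → ℝ → ℝ) (gj : ℕ → ℝ → ℝ → ℝ) : Prop :=
  (∃ δ > (0:ℝ), ∀ u v t : ℝ, u ∈ Set.Icc (1 - δ) (1 + δ) → v ∈ Set.Icc (1 - δ) (1 + δ) →
      |t| ≤ 1 + δ → HasSum (fun j : ℕ => gj j u v * t ^ j) (g u v t)) ∧
    ∀ j, IsPSDKernel1 (gj j)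
def AssumptionA2 (g : ℝ → ℝ → ℝ → ℝ) : Prop :=
  ∃ δL > (0:ℝ), ∃ L : ℝ≥0, LipschitzOnWith L (fun u => g u u u) (Set.Icc (1 - δL) (1 + δL))
def AssumptionA3 (β : ℝ) (gj : ℕ → ℝ → ℝ → ℝ) : Prop :=
  (∀ i ≤ ⌊2 / β⌋₊, ∃ U ∈ 𝓝 ((1:ℝ), (1:ℝ)),
      ContDiffOn ℝ (⌊2 / β⌋₊ + 1 - i) (fun p : ℝ × ℝ => gj i p.1 p.2) U) ∧
    ∃ J, ⌊2 / β⌋₊ < J ∧ 0 < gj J 1 1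
def kermap {d : ℕ} (g : ℝ → ℝ → ℝ → ℝ) (τ : ℝ) (x y : Fin d → ℝ) : ℝ :=
  g (sqnorm x / τ) (sqnorm y / τ) (dotp x y / τ)
def kernelMatrix {d n : ℕ} (k : (Fin d → ℝ) → (Fin d → ℝ) → ℝ)
    (xs : Fin n → Fin d → ℝ) : Matrix (Fin n) (Fin n) ℝ :=
  Matrix.of fun i j => k (xs i) (xs j)
def ridgeEstimator {d n : ℕ} (k : (Fin d → ℝ) → (Fin d → ℝ) → ℝ) (lam : ℝ)
    (fstar : (Fin d → ℝ) → ℝ) (xs : Fin n → Fin d → ℝ) (x : Fin d → ℝ) : ℝ :=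
  dotProduct (fun i => fstar (xs i))
    (((kernelMatrix k xs + lam • (1 : Matrix (Fin n) (Fin n) ℝ))⁻¹).mulVec
      (fun i => k (xs i) x))
def biasOf {d : ℕ} (est : (Fin d → ℝ) → ℝ) (fstar : (Fin d → ℝ) → ℝ)
    (μ : Measure (Fin d → ℝ)) : ℝ :=
  ∫ x, (est x - fstar x) ^ 2 ∂μ
def polyApproxError (d m : ℕ) (f : (Fin d → ℝ) → ℝ) (μ : Measure (Fin d → ℝ)) : ℝ :=
  ⨅ p : {p : MvPolynomial (Fin d) ℝ // p.totalDegree ≤ m},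
    ∫ x, (f x - MvPolynomial.eval x (p : MvPolynomial (Fin d) ℝ)) ^ 2 ∂μ
def alphaExpG (α : ℝ) (g : ℝ → ℝ → ℝ → ℝ) : Prop :=
  ∀ u v t : ℝ, g u v t = Real.exp (-(u + v - 2 * t) ^ (α / 2))


lemma my_sqnorm_sub {d : ℕ} (x y : Fin d → ℝ) :
    sqnorm (x - y) = sqnorm x + sqnorm y - 2 * dotp x y := by
  simp only [sqnorm, dotp, Pi.sub_apply]
  rw [Finset.mul_sum, ← Finset.sum_add_distrib, ← Finset.sum_sub_distrib]
  exact Finset.sum_congr rfl fun i _ => by ring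

lemma my_choose_le_two_pow (n k : ℕ) : (n.choose k : ℝ) ≤ 2 ^ n := by
  have h : n.choose k ≤ 2 ^ n := by
    rcases le_or_gt k n with hk | hk
    · calc n.choose k ≤ ∑ i ∈ Finset.range (n + 1), n.choose i :=
          Finset.single_le_sum (fun i _ => Nat.zero_le _)
            (Finset.mem_range.2 (Nat.lt_succ_of_le hk))
      _ = 2 ^ n := Nat.sum_range_choose n
    · rw [Nat.choose_eq_zero_of_lt hk]; positivity
  calc (n.choose k : ℝ) ≤ ((2 ^ n : ℕ) : ℝ) := by exact_mod_cast h
    _ = 2 ^ n := by push_cast; ring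


theorem analytic_radial_kernel_rotationally_invariant_expansion
    -- h is real-analytic in a neighborhood of 2, with Taylor coefficients hcoef
    (h : ℝ → ℝ) (hcoef : ℕ → ℝ)
    (hanal : ∃ ρ > (0:ℝ), ∀ s : ℝ, |s - 2| < ρ →
      HasSum (fun i : ℕ => hcoef i * (s - 2) ^ i) (h s)) :
    ∃ δ > (0:ℝ), ∃ δ' > (0:ℝ), ∃ gj : ℕ → ℝ → ℝ → ℝ,
      -- each g_j is smooth in a neighborhood of (1,1)
      (∀ j, ∃ U ∈ 𝓝 ((1:ℝ), (1:ℝ)),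
        ContDiffOn ℝ (⊤ : ℕ∞) (fun p : ℝ × ℝ => gj j p.1 p.2) U) ∧
      -- g_j is given by the explicit double series (reindexed by i ↦ i + j)
      (∀ j : ℕ, ∀ u ∈ Set.Icc (1 - δ) (1 + δ), ∀ v ∈ Set.Icc (1 - δ) (1 + δ),
        HasSum
          (fun i : ℕ => ∑ l ∈ Finset.range (i + 1),
            hcoef (i + j) * (-2 : ℝ) ^ j * (Nat.choose (i + j) j) * (Nat.choose i l) *
              (u - 1) ^ l * (v - 1) ^ (i - l))
          (gj j u v)) ∧
      -- on the region near the sphere, Σ_j g_j(‖x‖²,‖x'‖²)·(xᵀx')^j converges absolutely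
      -- to h(‖x−x'‖²)
      (∀ d : ℕ, 2 ≤ d → ∀ x y : Fin d → ℝ,
        sqnorm x ∈ Set.Icc (1 - δ) (1 + δ) → sqnorm y ∈ Set.Icc (1 - δ) (1 + δ) →
        |dotp x y| ≤ δ' →
          Summable (fun j : ℕ => |gj j (sqnorm x) (sqnorm y) * (dotp x y) ^ j|) ∧
          HasSum (fun j : ℕ => gj j (sqnorm x) (sqnorm y) * (dotp x y) ^ j)
            (h (sqnorm (x - y)))) := by
  obtain ⟨ρ, hρ, hsum⟩ := hanal
  obtain ⟨R, hR⟩ : ∃ R : ℝ, R = 3 * ρ / 4 := ⟨_, rfl⟩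
  have hRpos : 0 < R := by rw [hR]; linarith
  -- bound on the Taylor coefficients
  have hs0 : HasSum (fun i => hcoef i * R ^ i) (h (2 + R)) := by
    have h1 := hsum (2 + R) (by rw [add_sub_cancel_left, abs_of_pos hRpos]; linarith)
    simpa using h1
  have hsummable : Summable fun i => |hcoef i * R ^ i| := hs0.summable.abs
  set M : ℝ := ∑' i, |hcoef i * R ^ i| with hMdef
  have hM : ∀ i, |hcoef i| * R ^ i ≤ M := by
    intro i
    have h1 : |hcoef i| * R ^ i = |hcoef i * R ^ i| := by
      rw [abs_mul, abs_of_pos (pow_pos hRpos i)]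
    rw [h1]
    exact Summable.le_tsum hsummable i fun j _ => abs_nonneg _
  have hM0 : 0 ≤ M := tsum_nonneg fun i => abs_nonneg _
  -- the coefficients of the expansion
  set c : ℕ → ℕ → ℝ := fun j i => hcoef (i + j) * (-2) ^ j * ((i + j).choose j) with hc
  have key : ∀ j i, |c j i| ≤ M * (4 / R) ^ j * (2 / R) ^ i := by
    intro j i
    have h1 : |c j i| = |hcoef (i + j)| * 2 ^ j * ((i + j).choose j : ℝ) := by
      rw [hc]; simp [abs_mul, abs_pow]
    have h2 : |hcoef (i + j)| ≤ M / R ^ (i + j) := by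
      rw [le_div_iff₀ (pow_pos hRpos _)]; exact hM (i + j)
    have h3 : ((i + j).choose j : ℝ) ≤ 2 ^ (i + j) := my_choose_le_two_pow _ _
    rw [h1]
    calc |hcoef (i + j)| * 2 ^ j * ((i + j).choose j : ℝ)
        ≤ (M / R ^ (i + j)) * 2 ^ j * 2 ^ (i + j) := by
          apply mul_le_mul _ h3 (by positivity) (by positivity)
          exact mul_le_mul_of_nonneg_right h2 (by positivity)
      _ = M * (4 / R) ^ j * (2 / R) ^ i := by
          rw [div_pow, div_pow, pow_add, show (4:ℝ) = 2 * 2 by norm_num, mul_pow]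
          field_simp
          ring
  set p : ℕ → FormalMultilinearSeries ℝ ℝ ℝ :=
    fun j => FormalMultilinearSeries.ofScalars ℝ (c j) with hp
  have hhalf : (0:ℝ) < R / 2 := by linarith
  have hrad : ∀ j, ((Real.toNNReal (R / 2) : ℝ≥0) : ℝ≥0∞) ≤ (p j).radius := by
    intro j
    apply FormalMultilinearSeries.le_radius_of_bound (C := M * (4 / R) ^ j)
    intro n
    rw [hp]
    rw [FormalMultilinearSeries.ofScalars_norm, Real.coe_toNNReal _ (le_of_lt hhalf)]
    have h21 : (2 / R) * (R / 2) = 1 := by field_simp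
    calc ‖c j n‖ * (R / 2) ^ n ≤ (M * (4 / R) ^ j * (2 / R) ^ n) * (R / 2) ^ n := by
          exact mul_le_mul_of_nonneg_right (by simpa [Real.norm_eq_abs] using key j n)
            (by positivity)
      _ = M * (4 / R) ^ j * ((2 / R) * (R / 2)) ^ n := by rw [mul_pow]; ring
      _ = M * (4 / R) ^ j := by rw [h21, one_pow, mul_one]
  have hps : ∀ j (y : ℝ), |y| < R / 2 → HasSum (fun i => c j i * y ^ i) ((p j).sum y) := by
    intro j y hy
    have hmem : y ∈ Metric.eball (0 : ℝ) (p j).radius := by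
      rw [Metric.mem_eball, edist_zero_right, enorm_eq_nnnorm]
      refine lt_of_lt_of_le ?_ (hrad j)
      rw [ENNReal.coe_lt_coe, ← NNReal.coe_lt_coe, coe_nnnorm, Real.norm_eq_abs,
        Real.coe_toNNReal _ (le_of_lt hhalf)]
      exact hy
    have h1 := (p j).hasSum hmem
    have h2 : (fun n => (p j) n fun _ => y) = fun n => c j n * y ^ n := by
      funext n
      rw [hp]
      rw [FormalMultilinearSeries.ofScalars_apply_eq, smul_eq_mul]
    rwa [h2] at h1
  refine ⟨ρ / 100, by linarith, ρ / 100, by linarith,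
    fun j u v => (p j).sum (u + v - 2), ?_, ?_, ?_⟩
  · -- smoothness
    intro j
    have hposrad : 0 < (p j).radius := by
      refine lt_of_lt_of_le ?_ (hrad j)
      simp only [ENNReal.coe_pos]
      rw [← Real.toNNReal_zero, Real.toNNReal_lt_toNNReal_iff hhalf]
      exact hhalf
    have hA : AnalyticAt ℝ (p j).sum 0 := ((p j).hasFPowerSeriesOnBall hposrad).analyticAt
    have hf : AnalyticAt ℝ (fun q : ℝ × ℝ => q.1 + q.2 - 2) ((1:ℝ), (1:ℝ)) :=
      (analyticAt_fst.add analyticAt_snd).sub analyticAt_const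
    have hA' : AnalyticAt ℝ (p j).sum ((1:ℝ) + 1 - 2) := by
      rw [show (1:ℝ) + 1 - 2 = 0 by norm_num]; exact hA
    have hcomp : AnalyticAt ℝ ((p j).sum ∘ fun q : ℝ × ℝ => q.1 + q.2 - 2) (1, 1) :=
      AnalyticAt.comp (g := (p j).sum)
        (f := fun q : ℝ × ℝ => q.1 + q.2 - 2) (x := ((1:ℝ), (1:ℝ))) hA' hf
    obtain ⟨U, hU, hAn⟩ := hcomp.exists_mem_nhds_analyticOnNhd
    exact ⟨U, hU, hAn.contDiffOn_of_completeSpace⟩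
  · -- the explicit series for g_j
    intro j u hu v hv
    have hu1 : |u - 1| ≤ ρ / 100 := abs_le.2 ⟨by linarith [hu.1], by linarith [hu.2]⟩
    have hv1 : |v - 1| ≤ ρ / 100 := abs_le.2 ⟨by linarith [hv.1], by linarith [hv.2]⟩
    have hw : |u + v - 2| < R / 2 := by
      have h1 : |u + v - 2| ≤ |u - 1| + |v - 1| := by
        have h2 : u + v - 2 = (u - 1) + (v - 1) := by ring
        rw [h2]
        exact abs_add_le _ _
      rw [hR]; linarith
    have h1 := hps j (u + v - 2) hw
    have heq : (fun i : ℕ => ∑ l ∈ Finset.range (i + 1),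
        hcoef (i + j) * (-2 : ℝ) ^ j * (Nat.choose (i + j) j) * (Nat.choose i l) *
          (u - 1) ^ l * (v - 1) ^ (i - l)) = fun i => c j i * (u + v - 2) ^ i := by
      funext i
      calc ∑ l ∈ Finset.range (i + 1),
            hcoef (i + j) * (-2 : ℝ) ^ j * (Nat.choose (i + j) j) * (Nat.choose i l) *
              (u - 1) ^ l * (v - 1) ^ (i - l)
          = c j i * ∑ l ∈ Finset.range (i + 1),
              (u - 1) ^ l * (v - 1) ^ (i - l) * (i.choose l : ℝ) := by
            rw [Finset.mul_sum]
            refine Finset.sum_congr rfl fun l _ => ?_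
            rw [hc]; ring
        _ = c j i * ((u - 1) + (v - 1)) ^ i := by rw [← add_pow]
        _ = c j i * (u + v - 2) ^ i := by ring_nf
    rw [heq]
    exact h1
  · -- convergence of the full expansion
    intro d hd x y hx hy ht
    set u := sqnorm x with hud
    set v := sqnorm y with hvd
    set t := dotp x y with htd
    have hu1 : |u - 1| ≤ ρ / 100 := abs_le.2 ⟨by linarith [hx.1], by linarith [hx.2]⟩
    have hv1 : |v - 1| ≤ ρ / 100 := abs_le.2 ⟨by linarith [hy.1], by linarith [hy.2]⟩
    have hwle : |u + v - 2| ≤ ρ / 50 := by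
      have h2 : u + v - 2 = (u - 1) + (v - 1) := by ring
      calc |u + v - 2| = |(u - 1) + (v - 1)| := by rw [h2]
        _ ≤ |u - 1| + |v - 1| := abs_add_le _ _
        _ ≤ ρ / 50 := by linarith
    have hw : |u + v - 2| < R / 2 := by rw [hR]; linarith
    set f : ℕ × ℕ → ℝ := fun q => c q.1 q.2 * (u + v - 2) ^ q.2 * t ^ q.1 with hf
    have e1 : (4 / R) * (ρ / 100) = 4 / 75 := by
      rw [hR]; field_simp; ring
    have e2 : (2 / R) * (ρ / 50) = 4 / 75 := by
      rw [hR]; field_simp; ring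
    have hfb : ∀ q : ℕ × ℕ, |f q| ≤ M * (4 / 75) ^ q.1 * (4 / 75) ^ q.2 := by
      rintro ⟨j, i⟩
      have h1 : |f (j, i)| = |c j i| * |u + v - 2| ^ i * |t| ^ j := by
        rw [hf]; simp [abs_mul, abs_pow]
      rw [h1]
      calc |c j i| * |u + v - 2| ^ i * |t| ^ j
          ≤ (M * (4 / R) ^ j * (2 / R) ^ i) * (ρ / 50) ^ i * (ρ / 100) ^ j := by
            apply mul_le_mul _ (pow_le_pow_left₀ (abs_nonneg _) ht j) (by positivity)
            · positivity
            · exact mul_le_mul (key j i) (pow_le_pow_left₀ (abs_nonneg _) hwle i)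
                (by positivity) (by positivity)
        _ = M * ((4 / R) * (ρ / 100)) ^ j * ((2 / R) * (ρ / 50)) ^ i := by
            rw [mul_pow, mul_pow]; ring
        _ = M * (4 / 75) ^ j * (4 / 75) ^ i := by rw [e1, e2]
    have hgsum : Summable (fun q : ℕ × ℕ => M * (4 / 75) ^ q.1 * (4 / 75) ^ q.2) := by
      have h1 : Summable (fun j : ℕ => M * (4 / 75 : ℝ) ^ j) :=
        (summable_geometric_of_lt_one (by norm_num) (by norm_num)).mul_left M
      have h2 : Summable (fun i : ℕ => (4 / 75 : ℝ) ^ i) :=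
        summable_geometric_of_lt_one (by norm_num) (by norm_num)
      exact h1.mul_of_nonneg h2 (fun j => by positivity) (fun i => by positivity)
    have habs : Summable fun q : ℕ × ℕ => |f q| :=
      Summable.of_nonneg_of_le (fun q => abs_nonneg _) hfb hgsum
    have hfsum : Summable f := habs.of_abs
    obtain ⟨S, hS⟩ := hfsum
    have hfiber : ∀ j : ℕ, HasSum (fun i => f (j, i)) ((p j).sum (u + v - 2) * t ^ j) :=
      fun j => (hps j (u + v - 2) hw).mul_right (t ^ j)
    have hS1 : HasSum (fun j : ℕ => (p j).sum (u + v - 2) * t ^ j) S :=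
      hS.prod_fiberwise hfiber
    -- identify S with h applied at the right point
    have hS2 : HasSum (fun n : ℕ => hcoef n * (u + v - 2 * t - 2) ^ n) S := by
      have he : HasSum (f ∘ Finset.HasAntidiagonal.sigmaAntidiagonalEquivProd) S :=
        (Finset.HasAntidiagonal.sigmaAntidiagonalEquivProd.hasSum_iff).2 hS
      refine HasSum.sigma he ?_
      intro n
      have hfin : HasSum (fun q : Finset.HasAntidiagonal.antidiagonal n => f q)
          (∑ q : Finset.HasAntidiagonal.antidiagonal n, f q) := hasSum_fintype _
      have hsumval : (∑ q : Finset.HasAntidiagonal.antidiagonal n, f q) =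
          hcoef n * (u + v - 2 * t - 2) ^ n := by
        rw [Finset.sum_coe_sort]
        rw [Finset.Nat.sum_antidiagonal_eq_sum_range_succ_mk]
        have hpow : (u + v - 2 * t - 2) ^ n = (-(2 * t) + (u + v - 2)) ^ n := by ring_nf
        rw [hpow, add_pow, Finset.mul_sum]
        refine Finset.sum_congr rfl fun k hk => ?_
        have hk' : k ≤ n := Nat.lt_succ_iff.1 (Finset.mem_range.1 hk)
        have hnk : n - k + k = n := Nat.sub_add_cancel hk'
        rw [hf]
        simp only
        rw [hc]
        simp only
        rw [hnk]
        ring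
      rw [← hsumval]
      exact hfin
    have hval : |u + v - 2 * t - 2| < ρ := by
      have h3 : |u + v - 2 * t - 2| ≤ |u + v - 2| + 2 * |t| := by
        have h2 : u + v - 2 * t - 2 = (u + v - 2) + (-(2 * t)) := by ring
        calc |u + v - 2 * t - 2| = |(u + v - 2) + (-(2 * t))| := by rw [h2]
          _ ≤ |u + v - 2| + |(-(2 * t))| := abs_add_le _ _
          _ = |u + v - 2| + 2 * |t| := by rw [abs_neg, abs_mul]; norm_num
      linarith
    have hS3 : HasSum (fun n : ℕ => hcoef n * (u + v - 2 * t - 2) ^ n)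
        (h (u + v - 2 * t)) := by
      have h1 := hsum (u + v - 2 * t) hval
      have h2 : (fun n : ℕ => hcoef n * (u + v - 2 * t - 2) ^ n) =
          fun n : ℕ => hcoef n * ((u + v - 2 * t) - 2) ^ n := by
        funext n; ring_nf
      rw [h2]
      exact h1
    have hSeq : S = h (u + v - 2 * t) := hS2.unique hS3
    have hnorm : h (sqnorm (x - y)) = h (u + v - 2 * t) := by
      rw [my_sqnorm_sub, ← hud, ← hvd, ← htd]
    constructor
    · -- absolute summability
      have hsplit := (summable_prod_of_nonneg (fun q => abs_nonneg (f q))).1 habs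
      refine Summable.of_nonneg_of_le (fun j => abs_nonneg _) (fun j => ?_) hsplit.2
      have h1 : HasSum (fun i => f (j, i)) ((p j).sum (u + v - 2) * t ^ j) := hfiber j
      calc |(p j).sum (u + v - 2) * t ^ j| = |∑' i, f (j, i)| := by rw [h1.tsum_eq]
        _ ≤ ∑' i, |f (j, i)| := by
            have h4 := norm_tsum_le_tsum_norm (f := fun i => f (j, i))
              (by simpa [Real.norm_eq_abs] using hsplit.1 j)
            simpa [Real.norm_eq_abs] using h4
    · rw [hnorm, ← hSeq]
      exact hS1
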